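/- arXiv:2310.04149 — 5 statements merged into one kernel-verified Lean document; each statement's English description precedes it below -/
import Mathlib

section
/- Let n be even and let α be a weak endomorphism of the cycle graph C_n with rank exactly n/2 + 1. Then α is an endomorphism of C_n, i.e. |α(i+1) - α(i)| ∈ {1, n-1} for all i. -/
/-!
If `α (i + 1) = α i` for some `i`, the closed walk `α 0, α 1, …, α n = α 0` has at most `n - 1`
moving steps, too few to wind around `C_n`, so it lifts to a closed walk in `ℤ`. A closed walk
in `ℤ` visiting two points at distance `d` has at least `2 d` moving steps, so the image of the
lift, which covers the image of `α`, has at most `(n - 1) / 2 + 1 = n / 2` points when `n` is even.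
-/

/-- `α` is a weak endomorphism of the cycle graph `C_n` on `ZMod n`. -/
def IsWeakEndCycle (n : ℕ) (α : ZMod n → ZMod n) : Prop :=
  ∀ i : ZMod n, α (i + 1) - α i ∈ ({0, 1, -1} : Set (ZMod n))

open Finset

section Walk

variable {G : Type*} [AddCommGroup G] [LinearOrder G] [IsOrderedAddMonoid G]

theorem abs_sub_le_sum_Ico_abs_sub (f : ℕ → G) {a b : ℕ} (hab : a ≤ b) :
    |f b - f a| ≤ ∑ j ∈ Ico a b, |f (j + 1) - f j| := by
  rw [← sum_Ico_sub f hab]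
  exact abs_sum_le_sum_abs _ _

/-- On a closed walk, two points are joined by two disjoint arcs, each at least as long as
their distance. -/
theorem two_nsmul_abs_sub_le_sum_range_abs_sub (f : ℕ → G) {n p q : ℕ} (hper : f n = f 0)
    (hp : p ≤ n) (hq : q ≤ n) :
    2 • |f p - f q| ≤ ∑ j ∈ range n, |f (j + 1) - f j| := by
  wlog hqp : q ≤ p generalizing p q
  · rw [abs_sub_comm]
    exact this hq hp (by omega)
  have hinner := abs_sub_le_sum_Ico_abs_sub f hqp
  have houter : |f p - f q| ≤
      ∑ j ∈ range q, |f (j + 1) - f j| + ∑ j ∈ Ico p n, |f (j + 1) - f j| := by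
    calc |f p - f q| = |(f q - f 0) + (f n - f p)| := by
          rw [hper, ← abs_neg]; congr 1; abel
      _ ≤ |f q - f 0| + |f n - f p| := abs_add_le _ _
      _ ≤ _ := by
          gcongr
          · rw [range_eq_Ico]
            exact abs_sub_le_sum_Ico_abs_sub f q.zero_le
          · exact abs_sub_le_sum_Ico_abs_sub f hp
  rw [← sum_range_add_sum_Ico _ hp, ← sum_range_add_sum_Ico _ hqp, two_nsmul]
  calc |f p - f q| + |f p - f q| ≤ _ := add_le_add hinner houter
    _ = _ := by abel

end Walk

theorem two_mul_card_image_range_le (f : ℕ → ℤ) {n : ℕ} (hn : 0 < n) (hper : f n = f 0) :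
    2 * (#((range n).image f) : ℤ) ≤ ∑ j ∈ range n, |f (j + 1) - f j| + 2 := by
  have hne : (range n).Nonempty := nonempty_range_iff.mpr hn.ne'
  obtain ⟨p, hp, hpmax⟩ := exists_max_image (range n) f hne
  obtain ⟨q, hq, hqmin⟩ := exists_min_image (range n) f hne
  have hsub : (range n).image f ⊆ Icc (f q) (f p) := by
    intro z hz
    obtain ⟨k, hk, rfl⟩ := mem_image.mp hz
    exact mem_Icc.mpr ⟨hqmin k hk, hpmax k hk⟩
  have hcard := (card_le_card hsub).trans_eq (Int.card_Icc _ _)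
  have hspread := two_nsmul_abs_sub_le_sum_range_abs_sub f hper
    (mem_range.mp hp).le (mem_range.mp hq).le
  rw [two_nsmul] at hspread
  have hqp := hqmin p hp
  have := le_abs_self (f p - f q)
  omega

theorem sum_range_abs_sub_add_one_le (f : ℕ → ℤ) {n i : ℕ} (hstep : ∀ j, |f (j + 1) - f j| ≤ 1)
    (hi : i < n) (hflat : f (i + 1) = f i) :
    ∑ j ∈ range n, |f (j + 1) - f j| + 1 ≤ n := by
  have hmem := mem_range.mpr hi
  have hbound := sum_le_card_nsmul ((range n).erase i) (fun j => |f (j + 1) - f j|) 1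
    fun j _ => hstep j
  rw [card_erase_of_mem hmem, card_range, nsmul_one] at hbound
  rw [← add_sum_erase _ _ hmem, hflat, sub_self, abs_zero, zero_add]
  omega

theorem two_mul_card_image_range_le_of_flat (f : ℕ → ℤ) {n i : ℕ}
    (hstep : ∀ j, |f (j + 1) - f j| ≤ 1) (hper : f n = f 0) (hi : i < n)
    (hflat : f (i + 1) = f i) :
    2 * #((range n).image f) ≤ n + 1 := by
  have h1 := two_mul_card_image_range_le f (by omega) hper
  have h2 := sum_range_abs_sub_add_one_le f hstep hi hflat
  omega

theorem ZMod.abs_valMinAbs_le_one {n : ℕ} {x : ZMod n} (hx : x ∈ ({0, 1, -1} : Set (ZMod n))) :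
    |x.valMinAbs| ≤ 1 := by
  have hone : |(1 : ZMod n).valMinAbs| ≤ 1 := by
    rcases Nat.lt_or_ge n 2 with hn | hn
    · interval_cases n
      · exact (abs_one (α := ℤ)).le
      · simp [Subsingleton.elim (1 : ZMod 1) 0]
    · rw [← Nat.cast_one, ZMod.valMinAbs_natCast_of_le_half (by omega)]
      simp
  obtain rfl | rfl | rfl := hx
  · simp
  · exact hone
  · rwa [(ZMod.abs_valMinAbs_eq_abs_valMinAbs).mpr (Or.inr rfl)]


namespace IsWeakEndCycle

variable {n : ℕ} {α : ZMod n → ZMod n}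

/-- The walk `k ↦ α k` on the cycle lifted to `ℤ`, starting at `0`: `valMinAbs` lifts the steps
`0, 1, -1` to `0, 1, -1`. -/
def lift (α : ZMod n → ZMod n) (k : ℕ) : ℤ :=
  ∑ j ∈ range k, (α ((j : ZMod n) + 1) - α j).valMinAbs

@[simp]
theorem lift_zero : lift α 0 = 0 :=
  sum_range_zero _

theorem lift_succ_sub_lift (k : ℕ) :
    lift α (k + 1) - lift α k = (α ((k : ZMod n) + 1) - α k).valMinAbs := by
  rw [lift, lift, sum_range_succ, add_sub_cancel_left]

theorem intCast_lift (k : ℕ) : (lift α k : ZMod n) = α k - α 0 := by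
  simpa [lift, Nat.cast_succ] using sum_range_sub (fun j : ℕ => α j) k

theorem abs_lift_succ_sub_lift_le_one (hα : IsWeakEndCycle n α) (k : ℕ) :
    |lift α (k + 1) - lift α k| ≤ 1 := by
  rw [lift_succ_sub_lift]
  exact ZMod.abs_valMinAbs_le_one (hα k)

theorem lift_val_succ_eq [NeZero n] {i : ZMod n} (hflat : α (i + 1) = α i) :
    lift α (i.val + 1) = lift α i.val := by
  rw [← sub_eq_zero, lift_succ_sub_lift, ZMod.natCast_zmod_val, hflat, sub_self,
    ZMod.valMinAbs_zero]

/-- With a flat step the lifted walk has fewer than `n` moving steps, so it cannot wind around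
the cycle. -/
theorem lift_self_eq_lift_zero [NeZero n] (hα : IsWeakEndCycle n α) {i : ZMod n}
    (hflat : α (i + 1) = α i) :
    lift α n = lift α 0 := by
  have hdvd : (n : ℤ) ∣ lift α n := by
    rw [← ZMod.intCast_zmod_eq_zero_iff_dvd, intCast_lift, ZMod.natCast_self, sub_self]
  have hlt : |lift α n| < n := by
    have h1 := abs_sub_le_sum_Ico_abs_sub (lift α) n.zero_le
    have h2 := sum_range_abs_sub_add_one_le (lift α) (abs_lift_succ_sub_lift_le_one hα)
      (ZMod.val_lt i) (lift_val_succ_eq hflat)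
    rw [← range_eq_Ico, lift_zero, sub_zero] at h1
    omega
  rw [Int.eq_zero_of_abs_lt_dvd hdvd hlt, lift_zero]

theorem range_subset_image_lift [NeZero n] :
    Set.range α ⊆ (fun z : ℤ => α 0 + z) '' ↑((range n).image (lift α)) := by
  rintro _ ⟨x, rfl⟩
  refine ⟨lift α x.val, by simpa using ⟨x.val, x.val_lt, rfl⟩, ?_⟩
  simp [intCast_lift]

theorem two_mul_ncard_range_le [NeZero n] (hα : IsWeakEndCycle n α) {i : ZMod n}
    (hflat : α (i + 1) = α i) :
    2 * (Set.range α).ncard ≤ n + 1 := by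
  have hcard : (Set.range α).ncard ≤ #((range n).image (lift α)) :=
    calc (Set.range α).ncard ≤ _ := Set.ncard_le_ncard range_subset_image_lift (Set.toFinite _)
      _ ≤ _ := Set.ncard_image_le (Finset.finite_toSet _)
      _ = _ := Set.ncard_coe_finset _
  have hwalk := two_mul_card_image_range_le_of_flat (lift α) (abs_lift_succ_sub_lift_le_one hα)
    (lift_self_eq_lift_zero hα hflat) (ZMod.val_lt i) (lift_val_succ_eq hflat)
  omega

end IsWeakEndCycle

/-- For even `n`, a weak endomorphism of `C_n` of rank exactly `n/2 + 1` is an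
endomorphism: consecutive images always differ by `1` or `-1` (i.e. `n-1`) mod `n`. -/
theorem wEnd_rank_half_add_one_isEnd (n : ℕ) (hn : 4 ≤ n) (heven : Even n)
    (α : ZMod n → ZMod n) (hα : IsWeakEndCycle n α)
    (hrank : (Set.range α).ncard = n / 2 + 1) :
    ∀ i : ZMod n, α (i + 1) - α i ∈ ({1, -1} : Set (ZMod n)) := by
  have : NeZero n := ⟨by omega⟩
  intro i
  refine (hα i).resolve_left fun hzero => ?_
  have hbound := hα.two_mul_ncard_range_le (sub_eq_zero.mp hzero)
  obtain ⟨t, rfl⟩ := heven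
  omega
end

section
/- For n ≥ 5, swEnd(C_n) = Aut(C_n) ∪ K_n, and hence |swEnd(C_n)| = 3n. -/
/-- Adjacency in the cycle graph `C_n` on vertex set `ZMod n`. -/
def cycleAdj (n : ℕ) (u v : ZMod n) : Prop := v - u = 1 ∨ u - v = 1

/-- `α` is a strong weak endomorphism of `C_n`. -/
def IsStrongWeakEndCycle (n : ℕ) (α : ZMod n → ZMod n) : Prop :=
  ∀ u v : ZMod n, (cycleAdj n u v ∧ α u ≠ α v) ↔ cycleAdj n (α u) (α v)

/-- `α` is an automorphism of `C_n`: a bijection preserving adjacency both ways. -/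
def IsAutCycle (n : ℕ) (α : ZMod n → ZMod n) : Prop :=
  Function.Bijective α ∧ ∀ u v : ZMod n, cycleAdj n u v ↔ cycleAdj n (α u) (α v)

/-!
A strong weak endomorphism `α` moves along each edge `u, u + 1` by a step `α (u + 1) - α u` in
`{0, 1, -1}`. Non-adjacency of vertices at distance two or three must be preserved, which forces
consecutive steps to agree; hence `α x = α 0 + s * x` with `s ∈ {0, 1, -1}`, i.e. `α` is constant,
a rotation or a reflection, and these `3n` maps are pairwise distinct.
-/

namespace ZMod

variable {n : ℕ}

lemma natCast_ne_zero_of_lt {k : ℕ} (hk : 0 < k) (hkn : k < n) : (k : ZMod n) ≠ 0 := by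
  rw [Ne, natCast_eq_zero_iff]
  exact fun hdvd => absurd (Nat.le_of_dvd hk hdvd) (by omega)

lemma natCast_ne_one_and_ne_neg_one {k : ℕ} (hk : 2 ≤ k) (hkn : k + 2 ≤ n) :
    (k : ZMod n) ≠ 1 ∧ (k : ZMod n) ≠ -1 := by
  constructor
  · rw [Ne, ← Nat.cast_one, natCast_eq_natCast_iff', Nat.mod_eq_of_lt (show k < n by omega),
      Nat.mod_eq_of_lt (show 1 < n by omega)]
    omega
  · rw [Ne, eq_neg_iff_add_eq_zero, ← Nat.cast_succ]
    exact natCast_ne_zero_of_lt k.succ_pos (by omega)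

lemma eq_add_mul_of_sub_eq {f : ZMod n → ZMod n} {c : ZMod n} (h : ∀ u, f (u + 1) - f u = c)
    (x : ZMod n) : f x = f 0 + x * c := by
  have key (m : ℤ) : f m = f 0 + m * c := by
    induction m using Int.induction_on with
    | zero => simp
    | succ k ih =>
      rw [Int.cast_add, Int.cast_one]
      linear_combination ih + h ((k : ℤ) : ZMod n)
    | pred k ih =>
      have hk := h (((-k : ℤ) : ZMod n) - 1)
      rw [sub_add_cancel] at hk
      rw [Int.cast_sub, Int.cast_one]
      linear_combination ih - hk
  simpa using key x.cast

end ZMod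

section

variable {n : ℕ}

lemma cycleAdj_iff {u v : ZMod n} : cycleAdj n u v ↔ v - u = 1 ∨ v - u = -1 := by
  rw [cycleAdj, ← neg_sub v u, neg_eq_iff_eq_neg]

lemma ne_of_cycleAdj (hn : n ≠ 1) {u v : ZMod n} (h : cycleAdj n u v) : u ≠ v := by
  have := ZMod.nontrivial_iff.mpr hn
  rintro rfl
  simp [cycleAdj] at h

lemma not_cycleAdj_add_natCast {k : ℕ} (hk : 2 ≤ k) (hkn : k + 2 ≤ n) (u : ZMod n) :
    ¬ cycleAdj n u (u + k) := by
  rw [cycleAdj_iff, add_sub_cancel_left, not_or]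
  exact ZMod.natCast_ne_one_and_ne_neg_one hk hkn

lemma intCast_ne_one_of_not_cycleAdj {u v : ZMod n} {t : ℤ} (huv : ¬ cycleAdj n u v)
    (ht : v - u = t) : t ≠ 1 ∧ t ≠ -1 := by
  rw [cycleAdj_iff, ht] at huv
  constructor <;> rintro rfl <;> simp at huv

lemma isAutCycle_add (c : ZMod n) : IsAutCycle n (c + ·) := by
  refine ⟨(Equiv.addLeft c).bijective, fun u v => ?_⟩
  simp only [cycleAdj_iff, add_sub_add_left_eq_sub]

lemma isAutCycle_sub (c : ZMod n) : IsAutCycle n (c - ·) := by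
  refine ⟨(Equiv.subLeft c).bijective, fun u v => ?_⟩
  simp only [cycleAdj_iff, sub_sub_sub_cancel_left, ← neg_sub v u, neg_eq_iff_eq_neg, neg_neg]
  exact or_comm

lemma IsAutCycle.isStrongWeakEndCycle (hn : n ≠ 1) {α : ZMod n → ZMod n} (h : IsAutCycle n α) :
    IsStrongWeakEndCycle n α := fun u v =>
  ⟨fun hadj => (h.2 u v).mp hadj.1, fun hadj => ⟨(h.2 u v).mpr hadj, ne_of_cycleAdj hn hadj⟩⟩

lemma isStrongWeakEndCycle_const (hn : n ≠ 1) (c : ZMod n) :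
    IsStrongWeakEndCycle n (Function.const (ZMod n) c) := fun _ _ =>
  ⟨fun h => absurd rfl h.2, fun h => absurd rfl (ne_of_cycleAdj hn h)⟩

namespace IsStrongWeakEndCycle

variable {α : ZMod n → ZMod n}

lemma exists_sub_eq_intCast (h : IsStrongWeakEndCycle n α) (u : ZMod n) :
    ∃ s : ℤ, -1 ≤ s ∧ s ≤ 1 ∧ α (u + 1) - α u = s := by
  by_cases he : α u = α (u + 1)
  · exact ⟨0, by norm_num, by norm_num, by rw [he, sub_self, Int.cast_zero]⟩
  · rcases cycleAdj_iff.mp ((h u (u + 1)).mp ⟨Or.inl (add_sub_cancel_left u 1), he⟩) with h1 | h1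
    · exact ⟨1, by norm_num, le_rfl, by rw [h1, Int.cast_one]⟩
    · exact ⟨-1, le_rfl, by norm_num, by rw [h1, Int.cast_neg, Int.cast_one]⟩

lemma intCast_ne_one_of_sub_eq (h : IsStrongWeakEndCycle n α) {k : ℕ} (hk : 2 ≤ k)
    (hkn : k + 2 ≤ n) {v w : ZMod n} (hw : w = v + k) {t : ℤ} (ht : α w - α v = t) :
    t ≠ 1 ∧ t ≠ -1 := by
  subst hw
  exact intCast_ne_one_of_not_cycleAdj
    (fun hadj => not_cycleAdj_add_natCast hk hkn v ((h _ _).mpr hadj).1) ht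

/-- Three consecutive steps `a, b, c ∈ {-1, 0, 1}` of `α` span images of non-adjacent vertices,
so none of `a + b`, `b + c`, `a + b + c` is `±1`; this forces `a = b`. -/
lemma sub_succ_eq (h : IsStrongWeakEndCycle n α) (hn : 5 ≤ n) (u : ZMod n) :
    α (u + 1 + 1) - α (u + 1) = α (u + 1) - α u := by
  obtain ⟨a, ha₁, ha₂, ha⟩ := h.exists_sub_eq_intCast u
  obtain ⟨b, hb₁, hb₂, hb⟩ := h.exists_sub_eq_intCast (u + 1)
  obtain ⟨c, hc₁, hc₂, hc⟩ := h.exists_sub_eq_intCast (u + 1 + 1)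
  have hab := h.intCast_ne_one_of_sub_eq (k := 2) (v := u) (w := u + 1 + 1) le_rfl (by omega)
    (by push_cast; ring) (t := a + b) (by push_cast; linear_combination ha + hb)
  have hbc := h.intCast_ne_one_of_sub_eq (k := 2) (v := u + 1) (w := u + 1 + 1 + 1) le_rfl
    (by omega) (by push_cast; ring) (t := b + c) (by push_cast; linear_combination hb + hc)
  have habc := h.intCast_ne_one_of_sub_eq (k := 3) (v := u) (w := u + 1 + 1 + 1) (by norm_num)
    (by omega) (by push_cast; ring) (t := a + b + c)
    (by push_cast; linear_combination ha + hb + hc)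
  obtain rfl : b = a := by omega
  rw [ha, hb]

lemma eq_const_or_add_or_sub (h : IsStrongWeakEndCycle n α) (hn : 5 ≤ n) :
    (∃ c, α = Function.const (ZMod n) c) ∨ (∃ c, α = (c + ·)) ∨ (∃ c, α = (c - ·)) := by
  have hstep (u : ZMod n) : α (u + 1) - α u = α 1 - α 0 := by
    simpa using ZMod.eq_add_mul_of_sub_eq (f := fun u => α (u + 1) - α u)
      (fun u => sub_eq_zero.mpr (h.sub_succ_eq hn u)) u
  have hα (x : ZMod n) : α x = α 0 + x * (α 1 - α 0) := ZMod.eq_add_mul_of_sub_eq hstep x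
  obtain ⟨s, hs₁, hs₂, hs⟩ := h.exists_sub_eq_intCast 0
  rw [zero_add] at hs
  obtain rfl | rfl | rfl : s = 0 ∨ s = 1 ∨ s = -1 := by omega
  · exact Or.inl ⟨α 0, funext fun x => by simp [hα x, hs]⟩
  · exact Or.inr (Or.inl ⟨α 0, funext fun x => by simp [hα x, hs, add_comm]⟩)
  · exact Or.inr (Or.inr ⟨α 0, funext fun x => by simp [hα x, hs, sub_eq_add_neg]⟩)

end IsStrongWeakEndCycle

lemma isStrongWeakEndCycle_iff (hn : 5 ≤ n) {α : ZMod n → ZMod n} :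
    IsStrongWeakEndCycle n α ↔
      (∃ c, α = Function.const (ZMod n) c) ∨ (∃ c, α = (c + ·)) ∨ (∃ c, α = (c - ·)) := by
  refine ⟨fun h => h.eq_const_or_add_or_sub hn, ?_⟩
  rintro (⟨c, rfl⟩ | ⟨c, rfl⟩ | ⟨c, rfl⟩)
  · exact isStrongWeakEndCycle_const (by omega) c
  · exact (isAutCycle_add c).isStrongWeakEndCycle (by omega)
  · exact (isAutCycle_sub c).isStrongWeakEndCycle (by omega)

def constAddSub (n : ℕ) : ZMod n ⊕ ZMod n ⊕ ZMod n → ZMod n → ZMod n :=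
  Sum.elim (Function.const (ZMod n)) (Sum.elim (fun c x => c + x) (fun c x => c - x))

lemma range_constAddSub (hn : 5 ≤ n) :
    Set.range (constAddSub n) = {α | IsStrongWeakEndCycle n α} := by
  ext α
  simp [constAddSub, Set.Sum.elim_range, isStrongWeakEndCycle_iff hn, eq_comm]

lemma constAddSub_injective (hn : 3 ≤ n) : Function.Injective (constAddSub n) := by
  have h1 : (1 : ZMod n) ≠ 0 := by exact_mod_cast ZMod.natCast_ne_zero_of_lt one_pos (by omega)
  have h2 : (2 : ZMod n) ≠ 0 := by exact_mod_cast ZMod.natCast_ne_zero_of_lt two_pos (by omega)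
  refine Function.const_injective.sumElim (Function.Injective.sumElim ?_ ?_ ?_) ?_
  · exact fun c d hcd => by simpa using congrFun hcd 0
  · exact fun c d hcd => by simpa using congrFun hcd 0
  · intro c d hcd
    have h0 := congrFun hcd 0
    have h1' := congrFun hcd 1
    simp only [add_zero, sub_zero] at h0 h1'
    exact h2 (by linear_combination h1' - h0)
  · rintro c (d | d) hcd <;> have h0 := congrFun hcd 0 <;> have h1' := congrFun hcd 1 <;>
      simp only [Function.const_apply, Sum.elim_inl, Sum.elim_inr, add_zero, sub_zero] at h0 h1'
    · exact h1 (by linear_combination h0 - h1')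
    · exact h1 (by linear_combination h1' - h0)

lemma setOf_isStrongWeakEndCycle_eq (hn : 5 ≤ n) :
    {α : ZMod n → ZMod n | IsStrongWeakEndCycle n α} =
      {α | IsAutCycle n α} ∪ {α | ∃ c, α = Function.const (ZMod n) c} := by
  ext α
  refine ⟨fun h => ?_, ?_⟩
  · rcases h.eq_const_or_add_or_sub hn with hc | ⟨c, rfl⟩ | ⟨c, rfl⟩
    · exact Or.inr hc
    · exact Or.inl (isAutCycle_add c)
    · exact Or.inl (isAutCycle_sub c)
  · rintro (hA | ⟨c, rfl⟩)
    · exact hA.isStrongWeakEndCycle (by omega)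
    · exact isStrongWeakEndCycle_const (by omega) c

lemma card_setOf_isStrongWeakEndCycle (hn : 5 ≤ n) :
    Nat.card {α : ZMod n → ZMod n | IsStrongWeakEndCycle n α} = 3 * n := by
  have : NeZero n := ⟨by omega⟩
  rw [← range_constAddSub hn, Nat.card_range_of_injective (constAddSub_injective (by omega)),
    Nat.card_sum, Nat.card_sum, Nat.card_zmod]
  ring

end

/-- For `n ≥ 5`, `swEnd(C_n) = Aut(C_n) ∪ K_n` and hence `|swEnd(C_n)| = 3n`. -/
theorem swEnd_eq_aut_union_const (n : ℕ) (hn : 5 ≤ n) :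
    {α : ZMod n → ZMod n | IsStrongWeakEndCycle n α} =
      {α : ZMod n → ZMod n | IsAutCycle n α} ∪
        {α : ZMod n → ZMod n | ∃ c : ZMod n, α = Function.const (ZMod n) c} ∧
    Nat.card {α : ZMod n → ZMod n | IsStrongWeakEndCycle n α} = 3 * n :=
  ⟨setOf_isStrongWeakEndCycle_eq hn, card_setOf_isStrongWeakEndCycle hn⟩
end

section
/- Let α be a weak endomorphism of the cycle graph C_n. Then α is a regular element of the monoid wEnd(C_n) (i.e. there exists β ∈ wEnd(C_n) with α = αβα) if and only if α has a full sublist of consecutive images: there exist 1 ≤ i ≤ n and u ∈ {-1, 1} such that α(i+t) = α(i) + t·u for all 0 ≤ t ≤ rank(α) - 1 (indices and values mod n). -/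
/-- `α` has a full sublist of consecutive images: for `k = rank α`, there are a vertex `i`
and a direction `u ∈ {1, -1}` with `α (i + t) = α i + t·u` for all `0 ≤ t ≤ k - 1`. -/
def HasFullSublist (n : ℕ) (α : ZMod n → ZMod n) : Prop :=
  ∃ (i u : ZMod n), (u = 1 ∨ u = -1) ∧
    ∀ t : ℕ, t < (Set.range α).ncard → α (i + (t : ZMod n)) = α i + (t : ZMod n) * u

/-!
The image of a weak endomorphism of `C_n` is an arc: it is swept out by the lazy walk
`α 0, α 1, …, α (n - 1)`, and adding a neighbour of a point of an arc yields an arc again.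
If `α β α = α`, then `β` lifts the arc of the `k = rank α` values of `α` injectively to a lazy
walk in `C_n`; an injective lazy walk never pauses and never turns back, so it runs straight in
one direction, and along it `α` takes `k` consecutive values. Conversely, a full sublist starting
at `i` with direction `u` is inverted on the image of `α` by the affine map
`x ↦ i + u (x - α i)`, which is a weak endomorphism.
-/

open Set

section Arc

variable {n : ℕ}

theorem ZMod.natCast_injOn_Iio : InjOn (Nat.cast : ℕ → ZMod n) (Iio n) := fun s hs t ht h => by
  simpa [ZMod.val_natCast_of_lt hs, ZMod.val_natCast_of_lt ht] using congrArg ZMod.val h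

theorem ZMod.ncard_le [NeZero n] (S : Set (ZMod n)) : S.ncard ≤ n :=
  (ncard_le_card S).trans (Nat.card_zmod n).le

def arc (a u : ZMod n) (L : ℕ) : Set (ZMod n) := (fun j : ℕ => a + j * u) '' Iio L

theorem ncard_arc {u : ZMod n} (hu : IsUnit u) (a : ZMod n) {L : ℕ} (hL : L ≤ n) :
    (arc a u L).ncard = L := by
  rw [arc, InjOn.ncard_image, ← Finset.coe_Iio, ncard_coe_finset, Nat.card_Iio]
  intro s hs t ht h
  exact ZMod.natCast_injOn_Iio (lt_of_lt_of_le hs hL) (lt_of_lt_of_le ht hL)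
    (hu.mul_right_cancel (add_left_cancel h))

theorem arc_succ (a u : ZMod n) (L : ℕ) : arc a u (L + 1) = insert (a + L * u) (arc a u L) := by
  rw [arc, arc, Iio_add_one_eq_Iic, ← Iio_insert, image_insert_eq]

theorem arc_succ_sub (a u : ZMod n) (L : ℕ) :
    arc (a - u) u (L + 1) = insert (a - u) (arc a u L) := by
  ext x
  simp only [arc, mem_image, mem_Iio, mem_insert_iff]
  constructor
  · rintro ⟨_ | j, hj, rfl⟩
    · simp
    · exact Or.inr ⟨j, by omega, by push_cast; ring⟩
  · rintro (rfl | ⟨j, hj, rfl⟩)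
    · exact ⟨0, by omega, by simp⟩
    · exact ⟨j + 1, by omega, by push_cast; ring⟩

theorem arc_one_self [NeZero n] (a : ZMod n) : arc a 1 n = univ :=
  eq_univ_of_forall fun x => ⟨(x - a).val, ZMod.val_lt _, by simp⟩

def IsArc (S : Set (ZMod n)) : Prop := ∃ a, ∃ L ≤ n, S = arc a 1 L

theorem IsArc.exists_eq_arc_ncard {S : Set (ZMod n)} (hS : IsArc S) :
    ∃ a, S = arc a 1 S.ncard := by
  obtain ⟨a, L, hL, rfl⟩ := hS
  exact ⟨a, by rw [ncard_arc isUnit_one a hL]⟩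

theorem IsArc.insert {S : Set (ZMod n)} (hS : IsArc S) {x y : ZMod n} (hx : x ∈ S)
    (hy : y - x ∈ ({0, 1, -1} : Set (ZMod n))) : IsArc (insert y S) := by
  by_cases hyS : y ∈ S
  · rwa [insert_eq_of_mem hyS]
  obtain ⟨a, L, hL, rfl⟩ := hS
  obtain ⟨j, hj, rfl⟩ := hx
  simp only [mem_Iio] at hj
  have hLn : L < n := by
    refine lt_of_le_of_ne hL fun hLn => hyS ?_
    have : NeZero n := ⟨by omega⟩
    simp [hLn, arc_one_self]
  simp only [mem_insert_iff, mem_singleton_iff, sub_eq_iff_eq_add] at hy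
  rcases hy with rfl | rfl | rfl
  · exact (hyS ⟨j, hj, by simp⟩).elim
  · obtain rfl : j + 1 = L := by
      by_contra hne
      exact hyS ⟨j + 1, by simp only [mem_Iio]; omega, by push_cast; ring⟩
    exact ⟨a, j + 1 + 1, hLn, by rw [arc_succ a 1 (j + 1)]; congr 1; push_cast; ring⟩
  · obtain rfl : j = 0 := by
      by_contra hne
      exact hyS ⟨j - 1, by simp only [mem_Iio]; omega,
        by push_cast [Nat.one_le_iff_ne_zero.2 hne]; ring⟩
    exact ⟨a - 1, L + 1, hLn, by rw [arc_succ_sub]; congr 1; simp; ring⟩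

theorem IsWeakEndCycle.isArc_range [NeZero n] {α : ZMod n → ZMod n} (hα : IsWeakEndCycle n α) :
    IsArc (range α) := by
  have hwalk : ∀ m : ℕ, IsArc ((fun j : ℕ => α j) '' Iic m) := by
    intro m
    induction m with
    | zero => exact ⟨α 0, 1, NeZero.one_le, by ext; simp [arc, eq_comm]⟩
    | succ m ih =>
      rw [← Iio_insert, Iio_add_one_eq_Iic, image_insert_eq]
      exact ih.insert (x := α m) ⟨m, self_mem_Iic, rfl⟩ (by push_cast; exact hα m)
  convert hwalk (n - 1)
  refine Subset.antisymm ?_ (image_subset_range _ _ |>.trans (range_comp_subset_range _ _))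
  rintro _ ⟨x, rfl⟩
  exact ⟨x.val, by simp only [mem_Iic]; have := ZMod.val_lt x; omega, by simp⟩

end Arc

section Walk

variable {n : ℕ}

theorem exists_eq_add_mul_of_injOn {b : ℕ → ZMod n} {k : ℕ}
    (hstep : ∀ j, j + 1 < k → b (j + 1) - b j ∈ ({0, 1, -1} : Set (ZMod n)))
    (hinj : InjOn b (Iio k)) :
    ∃ v : ZMod n, (v = 1 ∨ v = -1) ∧ ∀ j < k, b j = b 0 + j * v := by
  have hunit : ∀ j, j + 1 < k → b (j + 1) - b j = 1 ∨ b (j + 1) - b j = -1 := by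
    intro j hj
    have hne : b (j + 1) ≠ b j := fun h => by
      simpa using hinj (show j + 1 < k from hj) (show j < k by omega) h
    simpa [sub_eq_zero, hne] using hstep j hj
  -- A switch of direction would make the walk return to the vertex it just left.
  have hconst : ∀ j, j + 2 < k → b (j + 2) - b (j + 1) = b (j + 1) - b j := by
    intro j hj
    by_contra hne
    have hback : b (j + 2) = b j := by
      rcases hunit (j + 1) (by omega) with h₂ | h₂ <;> rcases hunit j (by omega) with h₁ | h₁ <;>
        simp only [h₁, h₂, not_true_eq_false] at hne <;> linear_combination h₂ + h₁
    simpa using hinj (show j + 2 < k from hj) (show j < k by omega) hback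
  have hsteps : ∀ j, j + 1 < k → b (j + 1) - b j = b 1 - b 0 := by
    intro j hj
    induction j with
    | zero => rfl
    | succ j ih => rw [hconst j hj, ih (by omega)]
  rcases lt_or_ge 1 k with hk | hk
  · refine ⟨b 1 - b 0, hunit 0 hk, fun j hj => ?_⟩
    induction j with
    | zero => simp
    | succ j ih => push_cast; linear_combination hsteps j hj + ih (by omega)
  · exact ⟨1, Or.inl rfl, fun j hj => by obtain rfl : j = 0 := (by omega); simp⟩

end Walk

section Regular

variable {n : ℕ} {α : ZMod n → ZMod n}

theorem hasFullSublist_of_forall_add {i c u : ZMod n} (hu : u = 1 ∨ u = -1)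
    (h : ∀ t < (range α).ncard, α (i + t) = c + t * u) : HasFullSublist n α := by
  refine ⟨i, u, hu, fun t ht => ?_⟩
  have hc : α i = c := by simpa using h 0 (by omega)
  rw [h t ht, hc]

theorem HasFullSublist.of_regular [NeZero n] {β : ZMod n → ZMod n} (hα : IsWeakEndCycle n α)
    (hβ : IsWeakEndCycle n β) (hαβα : α = α ∘ β ∘ α) : HasFullSublist n α := by
  obtain ⟨a, ha⟩ := hα.isArc_range.exists_eq_arc_ncard
  set k := (range α).ncard
  have hk : k ≤ n := ZMod.ncard_le _
  have hsection : ∀ j < k, α (β (a + j)) = a + j := by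
    intro j hj
    obtain ⟨x, hx⟩ : a + j ∈ range α := ha ▸ ⟨j, hj, by simp⟩
    rw [← hx]
    exact (congrFun hαβα x).symm
  obtain ⟨v, hv, hb⟩ := exists_eq_add_mul_of_injOn (b := fun j : ℕ => β (a + j))
    (fun j _ => by push_cast; rw [← add_assoc]; exact hβ _)
    (fun s hs t ht hst => ZMod.natCast_injOn_Iio (lt_of_lt_of_le hs hk) (lt_of_lt_of_le ht hk)
      (add_left_cancel (by rw [← hsection s hs, ← hsection t ht]; exact congrArg α hst)))
  have hlift : ∀ j < k, α (β a + j * v) = a + j := fun j hj => by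
    rw [← hsection j hj, hb j hj, Nat.cast_zero, add_zero]
  rcases hv with rfl | rfl
  · exact hasFullSublist_of_forall_add (Or.inl rfl) (by simpa using hlift)
  · refine hasFullSublist_of_forall_add (i := β a - (k - 1 : ℕ)) (c := a + (k - 1 : ℕ))
      (Or.inr rfl) fun t ht => ?_
    have := hlift (k - 1 - t) (by omega)
    rw [Nat.cast_sub (show t ≤ k - 1 by omega)] at this
    rw [show β a - (k - 1 : ℕ) + t = β a + ((k - 1 : ℕ) - t) * -1 by ring, this]
    ring

theorem HasFullSublist.exists_regular [NeZero n] (h : HasFullSublist n α) :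
    ∃ β : ZMod n → ZMod n, IsWeakEndCycle n β ∧ α = α ∘ β ∘ α := by
  obtain ⟨i, u, hu, hfull⟩ := h
  have hu2 : u * u = 1 := by rcases hu with rfl | rfl <;> ring
  have hrange : range α = arc (α i) u (range α).ncard := by
    refine (eq_of_subset_of_ncard_le ?_ ?_ (finite_range α)).symm
    · rintro _ ⟨t, ht, rfl⟩
      exact ⟨i + t, hfull t ht⟩
    · rw [ncard_arc (IsUnit.of_mul_eq_one u hu2) _ (ZMod.ncard_le _)]
  refine ⟨fun x => i + u * (x - α i), fun x => ?_, funext fun x => ?_⟩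
  · rcases hu with rfl | rfl <;> simp
  · obtain ⟨t, ht, hx : α i + t * u = α x⟩ : α x ∈ arc (α i) u (range α).ncard :=
      hrange ▸ mem_range_self x
    have hβ : i + u * (α x - α i) = i + t := by
      rw [← hx]; linear_combination (t : ZMod n) * hu2
    rw [Function.comp_apply, Function.comp_apply, hβ, hfull t ht, hx]

end Regular

/-- A weak endomorphism `α` of `C_n` is a regular element of the monoid `wEnd(C_n)`
(i.e. `α = α β α` for some weak endomorphism `β`) iff it has a full sublist of
consecutive images. -/
theorem wEnd_regular_iff (n : ℕ) (hn : 3 ≤ n) (α : ZMod n → ZMod n)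
    (hα : IsWeakEndCycle n α) :
    (∃ β : ZMod n → ZMod n, IsWeakEndCycle n β ∧ α = α ∘ β ∘ α) ↔
      HasFullSublist n α := by
  have : NeZero n := ⟨by omega⟩
  exact ⟨fun ⟨_, hβ, hαβα⟩ => .of_regular hα hβ hαβα, HasFullSublist.exists_regular⟩
end

section
/- Let α, β be weak endomorphisms of the cycle graph C_n. Then ker(α) = ker(β) if and only if α = βσ for some σ in the dihedral group D_{2n} of automorphisms of C_n. -/
/-- The dihedral group `D_{2n}` of automorphisms of `C_n`, generated by the rotation
`i ↦ i + 1` and the reflection `i ↦ 1 - i` (i.e. `i ↦ n - i + 1` mod `n`). -/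
def dihedralCycle (n : ℕ) : Subgroup (Equiv.Perm (ZMod n)) :=
  Subgroup.closure {Equiv.addRight (1 : ZMod n), Equiv.subLeft (1 : ZMod n)}

open fwdDiff

section Sign

variable {R : Type*} [CommRing R] {x y : R}

lemma mul_eq_one_or_eq_neg_one (hx : x = 1 ∨ x = -1) (hy : y = 1 ∨ y = -1) :
    x * y = 1 ∨ x * y = -1 := by
  rcases hx with rfl | rfl <;> rcases hy with rfl | rfl <;> simp

lemma mul_self_eq_one_of_eq_one_or_eq_neg_one (hx : x = 1 ∨ x = -1) : x * x = 1 := by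
  rcases hx with rfl | rfl <;> simp

lemma eq_of_ne_neg_of_eq_one_or_eq_neg_one (hx : x = 1 ∨ x = -1) (hy : y = 1 ∨ y = -1)
    (h : y ≠ -x) : y = x := by
  rcases hx with rfl | rfl <;> rcases hy with rfl | rfl <;> simp_all

lemma mul_eq_mul_of_neg_iff_neg {d d' e e' : R} (hd : d = 1 ∨ d = -1) (hd' : d' = 1 ∨ d' = -1)
    (he : e = 1 ∨ e = -1) (he' : e' = 1 ∨ e' = -1) (h : d' = -d ↔ e' = -e) :
    e' * d' = e * d := by
  by_cases hneg : d' = -d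
  · rw [hneg, h.mp hneg]; ring
  · rw [eq_of_ne_neg_of_eq_one_or_eq_neg_one hd hd' hneg,
      eq_of_ne_neg_of_eq_one_or_eq_neg_one he he' (mt h.mpr hneg)]

end Sign

section SignedWalk

variable {R : Type*} [CommRing R] {f g : ℤ → R}

lemma fwdDiff_eq_neg_iff {k l : ℤ} (hkl : f (k + 1) = f l) :
    Δ_[1] f l = -Δ_[1] f k ↔ f (l + 1) = f k := by
  rw [fwdDiff, fwdDiff, neg_sub, hkl, sub_left_inj]

lemma fwdDiff_eq_zero_iff_of_ker_eq (hfg : ∀ i j, f i = f j ↔ g i = g j) (k : ℤ) :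
    Δ_[1] f k = 0 ↔ Δ_[1] g k = 0 := by
  simp only [fwdDiff, sub_eq_zero, hfg]

variable (hf : ∀ k, Δ_[1] f k ∈ ({0, 1, -1} : Set R)) (hg : ∀ k, Δ_[1] g k ∈ ({0, 1, -1} : Set R))
  (hfg : ∀ i j, f i = f j ↔ g i = g j)
include hf hg hfg

/-- The move at `l` takes `g` back to `g k` iff `Δ g l = -Δ g k`, and the kernel transfers this
to `f`; for signs that forces equal products. -/
lemma fwdDiff_mul_fwdDiff_eq_of_eq {k l : ℤ} (hk : Δ_[1] g k ≠ 0) (hl : Δ_[1] g l ≠ 0)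
    (hkl : g (k + 1) = g l) :
    Δ_[1] f l * Δ_[1] g l = Δ_[1] f k * Δ_[1] g k := by
  have hfk : Δ_[1] f k ≠ 0 := mt (fwdDiff_eq_zero_iff_of_ker_eq hfg k).mp hk
  have hfl : Δ_[1] f l ≠ 0 := mt (fwdDiff_eq_zero_iff_of_ker_eq hfg l).mp hl
  refine mul_eq_mul_of_neg_iff_neg ((hg k).resolve_left hk) ((hg l).resolve_left hl)
    ((hf k).resolve_left hfk) ((hf l).resolve_left hfl) ?_
  rw [fwdDiff_eq_neg_iff hkl, fwdDiff_eq_neg_iff ((hfg _ _).mpr hkl), hfg]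

lemma fwdDiff_mul_fwdDiff_eq_of_le {i j : ℤ} (hi : Δ_[1] g i ≠ 0) (hj : Δ_[1] g j ≠ 0)
    (hij : i ≤ j) : Δ_[1] f j * Δ_[1] g j = Δ_[1] f i * Δ_[1] g i := by
  obtain rfl | hij := hij.eq_or_lt
  · rfl
  have hlast : ∀ k, i + 1 ≤ k →
      ∃ l, Δ_[1] g l ≠ 0 ∧ Δ_[1] f l * Δ_[1] g l = Δ_[1] f i * Δ_[1] g i ∧ g (l + 1) = g k := by
    intro k hk
    induction k, hk using Int.leInduction with
    | base => exact ⟨i, hi, rfl, rfl⟩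
    | succ k _ ih =>
      obtain ⟨l, hl, hli, hlk⟩ := ih
      by_cases hk : Δ_[1] g k = 0
      · exact ⟨l, hl, hli, hlk.trans (sub_eq_zero.mp hk).symm⟩
      · exact ⟨k, hk, (fwdDiff_mul_fwdDiff_eq_of_eq hf hg hfg hl hk hlk).trans hli, rfl⟩
  obtain ⟨l, hl, hli, hlj⟩ := hlast j hij
  exact (fwdDiff_mul_fwdDiff_eq_of_eq hf hg hfg hl hj hlj).trans hli

lemma exists_sign_fwdDiff_eq_mul :
    ∃ t : R, (t = 1 ∨ t = -1) ∧ ∀ k, Δ_[1] f k = t * Δ_[1] g k := by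
  by_cases hconst : ∀ k, Δ_[1] g k = 0
  · refine ⟨1, Or.inl rfl, fun k => ?_⟩
    rw [hconst k, (fwdDiff_eq_zero_iff_of_ker_eq hfg k).mpr (hconst k), mul_zero]
  obtain ⟨i, hi⟩ := not_forall.mp hconst
  have hfi : Δ_[1] f i ≠ 0 := mt (fwdDiff_eq_zero_iff_of_ker_eq hfg i).mp hi
  refine ⟨Δ_[1] f i * Δ_[1] g i,
    mul_eq_one_or_eq_neg_one ((hf i).resolve_left hfi) ((hg i).resolve_left hi), fun k => ?_⟩
  by_cases hk : Δ_[1] g k = 0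
  · rw [hk, (fwdDiff_eq_zero_iff_of_ker_eq hfg k).mpr hk, mul_zero]
  have hki : Δ_[1] f k * Δ_[1] g k = Δ_[1] f i * Δ_[1] g i := by
    rcases le_total i k with hik | hki
    · exact fwdDiff_mul_fwdDiff_eq_of_le hf hg hfg hi hk hik
    · exact (fwdDiff_mul_fwdDiff_eq_of_le hf hg hfg hk hi hki).symm
  calc Δ_[1] f k
      = Δ_[1] f k * (Δ_[1] g k * Δ_[1] g k) := by
        rw [mul_self_eq_one_of_eq_one_or_eq_neg_one ((hg k).resolve_left hk), mul_one]
    _ = Δ_[1] f i * Δ_[1] g i * Δ_[1] g k := by rw [← mul_assoc, hki]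

theorem exists_sign_eq_mul_add_of_ker_eq :
    ∃ t c : R, (t = 1 ∨ t = -1) ∧ ∀ k, f k = t * g k + c := by
  obtain ⟨t, ht, hstep⟩ := exists_sign_fwdDiff_eq_mul hf hg hfg
  have hper : Function.Periodic (fun k => f k - t * g k) 1 := fun k => by
    have hk := hstep k
    simp only [fwdDiff] at hk ⊢
    linear_combination hk
  refine ⟨t, f 0 - t * g 0, ht, fun k => ?_⟩
  have hk := hper.int_mul_eq k
  simp only [Int.cast_id, mul_one] at hk
  linear_combination hk

end SignedWalk

lemma IsWeakEndCycle.fwdDiff_comp_intCast_mem {n : ℕ} {α : ZMod n → ZMod n}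
    (hα : IsWeakEndCycle n α) (k : ℤ) :
    Δ_[1] (α ∘ Int.cast) k ∈ ({0, 1, -1} : Set (ZMod n)) := by
  simpa [fwdDiff] using hα k

lemma IsWeakEndCycle.exists_sign_eq_mul_add_of_ker_eq {n : ℕ} {α β : ZMod n → ZMod n}
    (hα : IsWeakEndCycle n α) (hβ : IsWeakEndCycle n β)
    (h : ∀ x y, α x = α y ↔ β x = β y) :
    ∃ t c : ZMod n, (t = 1 ∨ t = -1) ∧ ∀ x, α x = t * β x + c := by
  obtain ⟨t, c, ht, hαβ⟩ := _root_.exists_sign_eq_mul_add_of_ker_eq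
    hα.fwdDiff_comp_intCast_mem hβ.fwdDiff_comp_intCast_mem fun i j => h i j
  refine ⟨t, c, ht, fun x => ?_⟩
  obtain ⟨k, rfl⟩ := ZMod.intCast_surjective x
  exact hαβ k

lemma addRight_mem_dihedralCycle (n : ℕ) (c : ZMod n) : Equiv.addRight c ∈ dihedralCycle n := by
  obtain ⟨k, rfl⟩ := ZMod.intCast_surjective c
  have hpow : Equiv.addRight (1 : ZMod n) ^ k = Equiv.addRight (k : ZMod n) := by simp
  exact hpow ▸ zpow_mem (Subgroup.subset_closure (by simp)) k

lemma subLeft_mem_dihedralCycle (n : ℕ) (c : ZMod n) : Equiv.subLeft c ∈ dihedralCycle n := by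
  have hmul : Equiv.subLeft c = Equiv.addRight (c - 1) * Equiv.subLeft 1 := by
    ext x; simp [Equiv.Perm.mul_apply]
  exact hmul ▸ mul_mem (addRight_mem_dihedralCycle n _) (Subgroup.subset_closure (by simp))

theorem ker_eq_iff_dihedral_multiple_general (n : ℕ) (α β : ZMod n → ZMod n)
    (hα : IsWeakEndCycle n α) (hβ : IsWeakEndCycle n β) :
    (∀ x y : ZMod n, α x = α y ↔ β x = β y) ↔
      ∃ σ ∈ dihedralCycle n, α = ⇑σ ∘ β := by
  constructor
  · intro h
    obtain ⟨t, c, rfl | rfl, hαβ⟩ := hα.exists_sign_eq_mul_add_of_ker_eq hβ h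
    · refine ⟨Equiv.addRight c, addRight_mem_dihedralCycle n c, funext fun x => ?_⟩
      simp [hαβ]
    · refine ⟨Equiv.subLeft c, subLeft_mem_dihedralCycle n c, funext fun x => ?_⟩
      simp [hαβ, sub_eq_add_neg, add_comm]
  · rintro ⟨σ, -, rfl⟩ x y
    exact σ.injective.eq_iff

/-- Two weak endomorphisms `α, β` of `C_n` have the same kernel iff `α = β σ`
(apply `β` first, then `σ`) for some `σ` in the dihedral group `D_{2n}`. -/
theorem ker_eq_iff_dihedral_multiple (n : ℕ) (hn : 3 ≤ n) (α β : ZMod n → ZMod n)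
    (hα : IsWeakEndCycle n α) (hβ : IsWeakEndCycle n β) :
    (∀ x y : ZMod n, α x = α y ↔ β x = β y) ↔
      ∃ σ ∈ dihedralCycle n, α = ⇑σ ∘ β :=
  ker_eq_iff_dihedral_multiple_general n α β hα hβ
end

section
/- Let α, β be weak endomorphisms (respectively endomorphisms) of the cycle graph C_n. Then α and β are Green's R-related in the monoid wEnd(C_n) (respectively End(C_n)) if and only if ker(α) = ker(β). -/
/-- `α` is an endomorphism of the cycle graph `C_n` on `ZMod n`. -/
def IsEndCycle (n : ℕ) (α : ZMod n → ZMod n) : Prop :=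
  ∀ i : ZMod n, α (i + 1) - α i ∈ ({1, -1} : Set (ZMod n))

/-!
Write `Δ α i = α (i + 1) - α i` for the steps of a weak endomorphism; they lie in `{0, 1, -1}`,
and `Δ α i = 0` exactly when `(i, i + 1) ∈ ker α`, so equal kernels give equal zero patterns.
If `Δ α p = Δ β p ≠ 0` and `q` is the next position with `Δ β q ≠ 0`, then
`α (q + 1) - α p = Δ α p + Δ α q` and likewise for `β`; as `2 ≠ 0` in `ZMod n` for `n ≥ 3`,
the kernel condition on the pair `(p, q + 1)` forces `Δ α q = Δ β q`. Walking around the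
cycle, `Δ α = Δ β` or `Δ α = -Δ β`, i.e. `α` is `β` followed by a rotation or a reflection of
`C_n`. These are automorphisms, so `α` and `β` are right multiples of each other.
-/

open fwdDiff

lemma two_ne_zero_of_three_le {n : ℕ} (hn : 3 ≤ n) : (2 : ZMod n) ≠ 0 := by
  rw [← Nat.cast_ofNat, Ne, ZMod.natCast_eq_zero_iff]
  exact fun h => absurd (Nat.le_of_dvd two_pos h) (by omega)

section PlusMinusOne

variable {R : Type*} [Ring R] {x y : R}

lemma eq_or_eq_neg_of_mem_one_neg_one (hx : x ∈ ({1, -1} : Set R))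
    (hy : y ∈ ({1, -1} : Set R)) : x = y ∨ x = -y := by
  rcases hx with rfl | rfl <;> rcases hy with rfl | rfl <;> simp

lemma add_self_ne_zero_of_mem_one_neg_one (h2 : (2 : R) ≠ 0) (hx : x ∈ ({1, -1} : Set R)) :
    x + x ≠ 0 := by
  rcases hx with rfl | rfl
  · rwa [one_add_one_eq_two]
  · rwa [← neg_add, neg_ne_zero, one_add_one_eq_two]

end PlusMinusOne

lemma apply_add_natCast_eq_of_fwdDiff_eq_zero {M G : Type*} [AddCommMonoidWithOne M]
    [AddCommGroup G] {f : M → G} {a : M} {m : ℕ} (h : ∀ k < m, Δ_[1] f (a + k) = 0) :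
    f (a + m) = f a := by
  induction m with
  | zero => simp
  | succ m ih =>
    have hstep : f (a + m + 1) = f (a + m) := sub_eq_zero.1 (h m m.lt_succ_self)
    rw [Nat.cast_succ, ← add_assoc, hstep]
    exact ih fun k hk => h k (Nat.lt_succ_of_lt hk)

lemma ZMod.apply_eq_apply_zero_of_fwdDiff_eq_zero {n : ℕ} [NeZero n] {G : Type*}
    [AddCommGroup G] {f : ZMod n → G} (h : Δ_[1] f = 0) (x : ZMod n) : f x = f 0 := by
  simpa [ZMod.natCast_zmod_val] using
    apply_add_natCast_eq_of_fwdDiff_eq_zero (a := (0 : ZMod n)) (m := x.val)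
      fun k _ => congrFun h _

lemma IsWeakEndCycle.fwdDiff_mem_of_ne_zero {n : ℕ} {α : ZMod n → ZMod n}
    (hα : IsWeakEndCycle n α) {i : ZMod n} (hi : Δ_[1] α i ≠ 0) :
    Δ_[1] α i ∈ ({1, -1} : Set (ZMod n)) :=
  (hα i).resolve_left hi

lemma IsEndCycle.isWeakEndCycle {n : ℕ} {α : ZMod n → ZMod n} (hα : IsEndCycle n α) :
    IsWeakEndCycle n α :=
  fun i => Or.inr (hα i)

lemma isEndCycle_add_left (n : ℕ) (c : ZMod n) : IsEndCycle n (c + ·) := fun i =>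
  Or.inl (by simp only [add_sub_add_left_eq_sub, add_sub_cancel_left])

lemma isEndCycle_sub_left (n : ℕ) (c : ZMod n) : IsEndCycle n (c - ·) := fun i =>
  Or.inr (by rw [sub_sub_sub_cancel_left, sub_add_cancel_left]; exact Set.mem_singleton _)

section SameKernel

variable {n : ℕ} {α β : ZMod n → ZMod n}

lemma fwdDiff_eq_zero_iff_of_ker_eq_s18 (hker : ∀ x y, α x = α y ↔ β x = β y) (i : ZMod n) :
    Δ_[1] α i = 0 ↔ Δ_[1] β i = 0 :=
  sub_eq_zero.trans ((hker _ _).trans sub_eq_zero.symm)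

lemma fwdDiff_eq_of_fwdDiff_eq_of_apply_eq (h2 : (2 : ZMod n) ≠ 0) (hα : IsWeakEndCycle n α)
    (hβ : IsWeakEndCycle n β) (hker : ∀ x y, α x = α y ↔ β x = β y) {p q : ZMod n}
    (hpq : β q = β (p + 1)) (hp : Δ_[1] β p ≠ 0) (hq : Δ_[1] β q ≠ 0)
    (he : Δ_[1] α p = Δ_[1] β p) : Δ_[1] α q = Δ_[1] β q := by
  have hp' := hβ.fwdDiff_mem_of_ne_zero hp
  have hq' := hβ.fwdDiff_mem_of_ne_zero hq
  have hαq := hα.fwdDiff_mem_of_ne_zero ((fwdDiff_eq_zero_iff_of_ker_eq_s18 hker q).not.2 hq)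
  refine (eq_or_eq_neg_of_mem_one_neg_one hαq hq').resolve_right fun hneg => ?_
  have hα_pq : α (q + 1) - α p = Δ_[1] β p - Δ_[1] β q := by
    rw [sub_eq_add_neg (Δ_[1] β p), ← hneg, ← he]
    simp only [fwdDiff]
    rw [(hker _ _).2 hpq]
    abel
  have hβ_pq : β (q + 1) - β p = Δ_[1] β p + Δ_[1] β q := by
    simp only [fwdDiff]
    rw [hpq]
    abel
  have hsub_iff_add : Δ_[1] β p - Δ_[1] β q = 0 ↔ Δ_[1] β p + Δ_[1] β q = 0 := by
    rw [← hα_pq, ← hβ_pq, sub_eq_zero, sub_eq_zero]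
    exact hker _ _
  apply add_self_ne_zero_of_mem_one_neg_one h2 hp'
  rcases eq_or_eq_neg_of_mem_one_neg_one hq' hp' with hqp | hqp
  · have h := hsub_iff_add.1 (by rw [hqp, sub_self])
    rwa [hqp] at h
  · have h := hsub_iff_add.2 (by rw [hqp, add_neg_cancel])
    rwa [hqp, sub_neg_eq_add] at h

lemma fwdDiff_eq_of_fwdDiff_eq (h2 : (2 : ZMod n) ≠ 0) (hα : IsWeakEndCycle n α)
    (hβ : IsWeakEndCycle n β) (hker : ∀ x y, α x = α y ↔ β x = β y) (m : ℕ) {a : ZMod n}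
    (ha : Δ_[1] β a ≠ 0) (he : Δ_[1] α a = Δ_[1] β a) (hm : Δ_[1] β (a + 1 + m) ≠ 0) :
    Δ_[1] α (a + 1 + m) = Δ_[1] β (a + 1 + m) := by
  induction m using Nat.strong_induction_on generalizing a with
  | _ m ih =>
  by_cases hmid : ∃ k < m, Δ_[1] β (a + 1 + k) ≠ 0
  · obtain ⟨k, hk, hk0⟩ := hmid
    obtain ⟨j, rfl⟩ := Nat.exists_eq_add_of_lt hk
    have hshift : a + 1 + k + 1 + j = a + 1 + ((k + j + 1 : ℕ) : ZMod n) := by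
      push_cast
      ring
    rw [← hshift] at hm ⊢
    exact ih j (by omega) hk0 (ih k hk ha he hk0) hm
  · push Not at hmid
    exact fwdDiff_eq_of_fwdDiff_eq_of_apply_eq h2 hα hβ hker
      (apply_add_natCast_eq_of_fwdDiff_eq_zero hmid) ha hm he

lemma fwdDiff_eq_or_eq_neg_of_ker_eq [NeZero n] (h2 : (2 : ZMod n) ≠ 0)
    (hα : IsWeakEndCycle n α) (hβ : IsWeakEndCycle n β)
    (hker : ∀ x y, α x = α y ↔ β x = β y) :
    Δ_[1] α = Δ_[1] β ∨ Δ_[1] α = -Δ_[1] β := by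
  have hzero : ∀ b, Δ_[1] β b = 0 → Δ_[1] α b = 0 :=
    fun b => (fwdDiff_eq_zero_iff_of_ker_eq_s18 hker b).2
  by_cases hsame : ∃ a, Δ_[1] β a ≠ 0 ∧ Δ_[1] α a = Δ_[1] β a
  · obtain ⟨a, ha, he⟩ := hsame
    refine Or.inl (funext fun b => ?_)
    by_cases hb : Δ_[1] β b = 0
    · rw [hb, hzero b hb]
    have hab : b = a + 1 + ((b - a - 1).val : ZMod n) := by
      rw [ZMod.natCast_zmod_val]
      ring
    rw [hab] at hb ⊢
    exact fwdDiff_eq_of_fwdDiff_eq h2 hα hβ hker _ ha he hb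
  · push Not at hsame
    refine Or.inr (funext fun b => ?_)
    by_cases hb : Δ_[1] β b = 0
    · rw [Pi.neg_apply, hb, hzero b hb, neg_zero]
    have hαb := hα.fwdDiff_mem_of_ne_zero ((fwdDiff_eq_zero_iff_of_ker_eq_s18 hker b).not.2 hb)
    exact (eq_or_eq_neg_of_mem_one_neg_one hαb (hβ.fwdDiff_mem_of_ne_zero hb)).resolve_left
      (hsame b hb)

lemma eq_add_or_eq_sub_of_ker_eq (hn : 3 ≤ n) (hα : IsWeakEndCycle n α)
    (hβ : IsWeakEndCycle n β) (hker : ∀ x y, α x = α y ↔ β x = β y) :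
    (∃ c, ∀ x, α x = c + β x) ∨ (∃ c, ∀ x, α x = c - β x) := by
  have : NeZero n := ⟨by omega⟩
  rcases fwdDiff_eq_or_eq_neg_of_ker_eq (two_ne_zero_of_three_le hn) hα hβ hker with h | h
  · have hconst : Δ_[1] (α - β) = 0 := funext fun i => by
      simpa [fwdDiff, sub_eq_zero, sub_sub_sub_comm] using congrFun h i
    refine Or.inl ⟨α 0 - β 0, fun x => ?_⟩
    have hx := ZMod.apply_eq_apply_zero_of_fwdDiff_eq_zero hconst x
    rw [Pi.sub_apply, Pi.sub_apply] at hx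
    linear_combination hx
  · have hconst : Δ_[1] (α + β) = 0 := by rw [fwdDiff_add, h, neg_add_cancel]
    refine Or.inr ⟨α 0 + β 0, fun x => ?_⟩
    have hx := ZMod.apply_eq_apply_zero_of_fwdDiff_eq_zero hconst x
    rw [Pi.add_apply, Pi.add_apply] at hx
    linear_combination hx

end SameKernel

/-- Green's `R`-relation in any family `P` of weak endomorphisms of `C_n` that contains all
rotations and reflections. -/
theorem greenR_iff_ker_eq_of_isometries_mem {n : ℕ} (hn : 3 ≤ n)
    (P : (ZMod n → ZMod n) → Prop) (hP : ∀ γ, P γ → IsWeakEndCycle n γ)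
    (hadd : ∀ c, P (c + ·)) (hsub : ∀ c, P (c - ·)) {α β : ZMod n → ZMod n}
    (hα : P α) (hβ : P β) :
    ((∃ γ, P γ ∧ α = γ ∘ β) ∧ (∃ δ, P δ ∧ β = δ ∘ α)) ↔
      ∀ x y : ZMod n, α x = α y ↔ β x = β y := by
  constructor
  · rintro ⟨⟨γ, -, hγ⟩, ⟨δ, -, hδ⟩⟩ x y
    exact ⟨fun h => by rw [hδ]; exact congrArg δ h, fun h => by rw [hγ]; exact congrArg γ h⟩
  · intro hker
    rcases eq_add_or_eq_sub_of_ker_eq hn (hP α hα) (hP β hβ) hker with ⟨c, hc⟩ | ⟨c, hc⟩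
    · refine ⟨⟨(c + ·), hadd c, funext hc⟩, ⟨(-c + ·), hadd (-c), funext fun x => ?_⟩⟩
      rw [Function.comp_apply, hc x, neg_add_cancel_left]
    · refine ⟨⟨(c - ·), hsub c, funext hc⟩, ⟨(c - ·), hsub c, funext fun x => ?_⟩⟩
      rw [Function.comp_apply, hc x, sub_sub_cancel]

/-- Green's `R`-relation on `wEnd(C_n)` and on `End(C_n)`: `α R β` (each is a right
multiple `β γ`, i.e. `γ ∘ β`, of the other within the monoid) iff `ker α = ker β`.
Both the weak-endomorphism and the endomorphism cases are stated. -/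
theorem green_R_iff_ker_eq (n : ℕ) (hn : 3 ≤ n) :
    (∀ α β : ZMod n → ZMod n, IsWeakEndCycle n α → IsWeakEndCycle n β →
      (((∃ γ, IsWeakEndCycle n γ ∧ α = γ ∘ β) ∧ (∃ δ, IsWeakEndCycle n δ ∧ β = δ ∘ α)) ↔
        ∀ x y : ZMod n, α x = α y ↔ β x = β y)) ∧
    (∀ α β : ZMod n → ZMod n, IsEndCycle n α → IsEndCycle n β →
      (((∃ γ, IsEndCycle n γ ∧ α = γ ∘ β) ∧ (∃ δ, IsEndCycle n δ ∧ β = δ ∘ α)) ↔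
        ∀ x y : ZMod n, α x = α y ↔ β x = β y)) :=
  ⟨fun _ _ hα hβ => greenR_iff_ker_eq_of_isometries_mem hn _ (fun _ => id)
      (fun c => (isEndCycle_add_left n c).isWeakEndCycle)
      (fun c => (isEndCycle_sub_left n c).isWeakEndCycle) hα hβ,
    fun _ _ hα hβ => greenR_iff_ker_eq_of_isometries_mem hn _
      (fun _ => IsEndCycle.isWeakEndCycle) (isEndCycle_add_left n) (isEndCycle_sub_left n)
      hα hβ⟩
end
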